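/- arXiv:2508.07254 — 6 statements merged into one kernel-verified Lean document; each statement's English description precedes it below -/
import Mathlib

section
/- If x* is a local weak Pareto optimum of min (f₁,...,f_m) with each f_i continuously differentiable, then x* is Pareto critical: there exists θ in the unit simplex Δ^m with Σ_i θ_i ∇f_i(x*) = 0. -/
/-!
If no convex combination of the gradients vanishes, Gordan's alternative (Hahn–Banach separation of
`0` from their convex hull) gives a direction `d` with `⟪∇fᵢ(x*), d⟫ < 0` for every `i`. Moving from
`x*` a short way along `d` then strictly decreases all `fᵢ` at once, contradicting local weak
Pareto optimality.
-/

open InnerProductSpace Topology Filter Set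

def IsLocalWeakParetoMin {ι E : Type*} [TopologicalSpace E] (f : ι → E → ℝ) (x : E) : Prop :=
  ∃ U ∈ 𝓝 x, ¬ ∃ y ∈ U, ∀ i, f i y < f i x

/-- Gordan's alternative, by separating `0` from the compact convex hull of the `v i`. -/
theorem exists_strongDual_forall_neg_of_zero_notMem {E ι : Type*} [NormedAddCommGroup E]
    [NormedSpace ℝ E] [Fintype ι] (v : ι → E)
    (h : (0 : E) ∉ Fintype.linearCombination ℝ v '' stdSimplex ℝ ι) :
    ∃ φ : StrongDual ℝ E, ∀ i, φ (v i) < 0 := by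
  classical
  have hconvex := (convex_stdSimplex ℝ ι).linear_image (Fintype.linearCombination ℝ v)
  have hcompact := (isCompact_stdSimplex ℝ ι).image
    (LinearMap.continuous_of_finiteDimensional (Fintype.linearCombination ℝ v))
  obtain ⟨φ, u, hφ, hu⟩ := geometric_hahn_banach_closed_point hconvex hcompact.isClosed h
  refine ⟨φ, fun i => ?_⟩
  have hvi : v i ∈ Fintype.linearCombination ℝ v '' stdSimplex ℝ ι :=
    ⟨Pi.single i 1, single_mem_stdSimplex ℝ i, by simp⟩
  linarith [hφ _ hvi, map_zero φ]

theorem HasFDerivAt.eventually_lt_of_apply_neg {E : Type*} [NormedAddCommGroup E]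
    [NormedSpace ℝ E] {f : E → ℝ} {f' : StrongDual ℝ E} {x d : E} (hf : HasFDerivAt f f' x)
    (hd : f' d < 0) : ∀ᶠ t in 𝓝[>] (0 : ℝ), f (x + t • d) < f x := by
  have hline : HasDerivAt (fun t : ℝ => f (x + t • d)) (f' d) 0 := by
    have hpath := ((hasDerivAt_id (0 : ℝ)).smul_const d).const_add x
    simp only [id, one_smul] at hpath
    exact (by simpa using hf : HasFDerivAt f f' (x + (0 : ℝ) • d)).comp_hasDerivAt 0 hpath
  have hslope : ∀ᶠ t in 𝓝[>] (0 : ℝ), t⁻¹ * (f (x + t • d) - f x) < 0 := by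
    simpa using hline.tendsto_slope_zero_right.eventually (Iio_mem_nhds hd)
  filter_upwards [hslope, self_mem_nhdsWithin] with t ht (htpos : 0 < t)
  exact sub_neg.mp (neg_of_mul_neg_right ht (inv_nonneg.mpr htpos.le))

theorem IsLocalWeakParetoMin.exists_nonneg_of_hasFDerivAt {E ι : Type*} [NormedAddCommGroup E]
    [NormedSpace ℝ E] [Finite ι] {f : ι → E → ℝ} {f' : ι → StrongDual ℝ E} {x : E}
    (hx : IsLocalWeakParetoMin f x) (hf : ∀ i, HasFDerivAt (f i) (f' i) x) (d : E) :
    ∃ i, 0 ≤ f' i d := by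
  by_contra! hd
  obtain ⟨U, hU, hnot⟩ := hx
  have hmem : ∀ᶠ t in 𝓝[>] (0 : ℝ), x + t • d ∈ U := by
    refine nhdsWithin_le_nhds (ContinuousAt.preimage_mem_nhds ?_ (by simpa using hU))
    fun_prop
  have hdesc : ∀ᶠ t in 𝓝[>] (0 : ℝ), ∀ i, f i (x + t • d) < f i x :=
    eventually_all.mpr fun i => (hf i).eventually_lt_of_apply_neg (hd i)
  obtain ⟨t, htU, ht⟩ := (hmem.and hdesc).exists
  exact hnot ⟨x + t • d, htU, ht⟩

theorem stmt_3 (n m : ℕ) (f : Fin (m + 1) → EuclideanSpace ℝ (Fin n) → ℝ)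
    (hf : ∀ i, ContDiff ℝ 1 (f i)) (xstar : EuclideanSpace ℝ (Fin n))
    (hx : ∃ U ∈ nhds xstar, ¬ ∃ y ∈ U, ∀ i, f i y < f i xstar) :
    ∃ θ : Fin (m + 1) → ℝ, (∀ i, 0 ≤ θ i) ∧ (∑ i, θ i = 1) ∧
      ∑ i, θ i • gradient (f i) xstar = 0 := by
  by_contra hθ
  obtain ⟨φ, hφ⟩ := exists_strongDual_forall_neg_of_zero_notMem (fun i => gradient (f i) xstar)
    (by
      rintro ⟨θ, ⟨hθ0, hθ1⟩, hsum⟩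
      exact hθ ⟨θ, hθ0, hθ1, by simpa [Fintype.linearCombination_apply] using hsum⟩)
  have hgrad i : HasFDerivAt (f i) (toDual ℝ _ (gradient (f i) xstar)) xstar :=
    ((hf i).differentiable one_ne_zero xstar).hasGradientAt.hasFDerivAt
  obtain ⟨i, hi⟩ := IsLocalWeakParetoMin.exists_nonneg_of_hasFDerivAt hx hgrad ((toDual ℝ _).symm φ)
  rw [toDual_apply_apply, real_inner_comm, toDual_symm_apply] at hi
  exact (hφ i).not_ge hi
end

section
/- (Opial's lemma) Let S ⊆ ℝⁿ be nonempty and x : [0,∞) → ℝⁿ. If (i) every limit point of x(t) as t → ∞ belongs to S, and (ii) for every z ∈ S the limit lim_{t→∞} ‖x(t) − z‖ exists, then x(t) converges to some point x^∞ ∈ S as t → ∞. -/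
open Filter Topology Metric

/-!
Since `‖x t - z‖` converges for some `z ∈ S`, the trajectory is eventually bounded, so by
compactness of closed balls it has a limit point `y`, which lies in `S`. Then `‖x t - y‖`
converges, and along the subsequence approaching `y` its limit is `0`; hence `x t → y`.
-/

section Opial

variable {ι X : Type*} [PseudoMetricSpace X]

theorem exists_seq_tendsto_comp_of_eventually_dist_le [ProperSpace X] {l : Filter ι} [l.NeBot]
    [l.IsCountablyGenerated] {f : ι → X} {z : X} {r : ℝ} (hf : ∀ᶠ t in l, dist (f t) z ≤ r) :
    ∃ y, ∃ ψ : ℕ → ι, Tendsto ψ atTop l ∧ Tendsto (f ∘ ψ) atTop (𝓝 y) := by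
  obtain ⟨y, -, hy⟩ := (isCompact_closedBall z r).exists_mapClusterPt (le_principal_iff.2 hf)
  obtain ⟨ψ, hfψ, hψ⟩ := hy.exists_seq_tendsto
  exact ⟨y, ψ, hψ, hfψ⟩

theorem tendsto_of_tendsto_dist_of_tendsto_comp {l : Filter ι} {f : ι → X} {y : X} {c : ℝ}
    {ψ : ℕ → ι} (hψ : Tendsto ψ atTop l) (hfψ : Tendsto (f ∘ ψ) atTop (𝓝 y))
    (hdist : Tendsto (fun t => dist (f t) y) l (𝓝 c)) : Tendsto f l (𝓝 y) := by
  have hc : c = 0 :=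
    tendsto_nhds_unique (hdist.comp hψ) (tendsto_iff_dist_tendsto_zero.1 hfψ)
  exact tendsto_iff_dist_tendsto_zero.2 (hc ▸ hdist)

end Opial

theorem stmt_7 (n : ℕ) (S : Set (EuclideanSpace ℝ (Fin n))) (hS : S.Nonempty)
    (x : ℝ → EuclideanSpace ℝ (Fin n))
    (h1 : ∀ y : EuclideanSpace ℝ (Fin n),
      (∃ t : ℕ → ℝ, Tendsto t atTop atTop ∧ Tendsto (fun k => x (t k)) atTop (nhds y)) → y ∈ S)
    (h2 : ∀ z ∈ S, ∃ l : ℝ, Tendsto (fun t => ‖x t - z‖) atTop (nhds l)) :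
    ∃ xinf ∈ S, Tendsto x atTop (nhds xinf) := by
  simp_rw [← dist_eq_norm] at h2
  obtain ⟨z, hz⟩ := hS
  obtain ⟨c, hc⟩ := h2 z hz
  obtain ⟨y, ψ, hψ, hxψ⟩ :=
    exists_seq_tendsto_comp_of_eventually_dist_le (hc.eventually_le_const (lt_add_one c))
  have hy : y ∈ S := h1 y ⟨ψ, hψ, hxψ⟩
  obtain ⟨c', hc'⟩ := h2 y hy
  exact ⟨y, hy, tendsto_of_tendsto_dist_of_tendsto_comp hψ hxψ hc'⟩
end

section
/- Let f_i : ℝⁿ → ℝ, i=1,...,m, be convex lower semicontinuous, y, x_k ∈ ℝⁿ, λ > 0, and let x⁺ := argmin_z { max_i (f_i(z) − f_i(x_k)) + (1/(2λ))‖z − y‖² }. Then there exists θ* ∈ Δ^m such that x⁺ = argmin_z { Σ_i θ*_i (f_i(z) − f_i(x_k)) + (1/(2λ))‖z − y‖² }. -/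
theorem stmt_13 (n m : ℕ) (f : Fin (m + 1) → EuclideanSpace ℝ (Fin n) → ℝ)
    (hconv : ∀ i, ConvexOn ℝ Set.univ (f i)) (hlsc : ∀ i, LowerSemicontinuous (f i))
    (y xk : EuclideanSpace ℝ (Fin n)) (lam : ℝ) (hlam : 0 < lam)
    (xp : EuclideanSpace ℝ (Fin n))
    (hxp : ∀ z : EuclideanSpace ℝ (Fin n),
      (Finset.univ.sup' Finset.univ_nonempty (fun i => f i xp - f i xk))
          + 1 / (2 * lam) * ‖xp - y‖ ^ 2
        ≤ (Finset.univ.sup' Finset.univ_nonempty (fun i => f i z - f i xk))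
          + 1 / (2 * lam) * ‖z - y‖ ^ 2) :
    ∃ θ : Fin (m + 1) → ℝ, (∀ i, 0 ≤ θ i) ∧ (∑ i, θ i = 1) ∧
      ∀ z : EuclideanSpace ℝ (Fin n),
        (∑ i, θ i * (f i xp - f i xk)) + 1 / (2 * lam) * ‖xp - y‖ ^ 2
          ≤ (∑ i, θ i * (f i z - f i xk)) + 1 / (2 * lam) * ‖z - y‖ ^ 2 := by
  classical
  set c : ℝ := 1 / (2 * lam) with hc
  have hc0 : 0 ≤ c := by positivity
  set g : Fin (m + 1) → EuclideanSpace ℝ (Fin n) → ℝ :=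
    fun i z => (f i z - f i xk) + c * ‖z - y‖ ^ 2 with hgdef
  set v : ℝ := (Finset.univ.sup' Finset.univ_nonempty (fun i => f i xp - f i xk))
      + c * ‖xp - y‖ ^ 2 with hv
  have hgxp : ∀ i, g i xp ≤ v := by
    intro i
    have := Finset.le_sup' (fun i => f i xp - f i xk) (Finset.mem_univ i)
    simp only [hgdef, hv]
    linarith
  have hvz : ∀ z, ∃ j, v ≤ g j z := by
    intro z
    obtain ⟨j, -, hj⟩ :=
      Finset.exists_mem_eq_sup' Finset.univ_nonempty (fun i => f i z - f i xk)
    refine ⟨j, ?_⟩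
    have h := hxp z
    rw [hj] at h
    simpa [hgdef, hv] using h
  -- convexity (inequality form) of g i
  have hgconv : ∀ (i : Fin (m + 1)) (z₁ z₂ : EuclideanSpace ℝ (Fin n)) (a b : ℝ),
      0 ≤ a → 0 ≤ b → a + b = 1 →
      g i (a • z₁ + b • z₂) ≤ a * g i z₁ + b * g i z₂ := by
    intro i z₁ z₂ a b ha hb hab
    have hf := (hconv i).2 (Set.mem_univ z₁) (Set.mem_univ z₂) ha hb hab
    simp only [smul_eq_mul] at hf
    have key : (a • z₁ + b • z₂) - y = a • (z₁ - y) + b • (z₂ - y) := by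
      have h1 : a • (z₁ - y) + b • (z₂ - y)
          = (a • z₁ + b • z₂) - (a + b) • y := by
        simp [smul_sub, add_smul]; abel
      rw [h1, hab, one_smul]
    have hn : ‖(a • z₁ + b • z₂) - y‖ ≤ a * ‖z₁ - y‖ + b * ‖z₂ - y‖ := by
      calc ‖(a • z₁ + b • z₂) - y‖ = ‖a • (z₁ - y) + b • (z₂ - y)‖ := by rw [key]
        _ ≤ ‖a • (z₁ - y)‖ + ‖b • (z₂ - y)‖ := norm_add_le _ _
        _ = a * ‖z₁ - y‖ + b * ‖z₂ - y‖ := by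
            rw [norm_smul, norm_smul, Real.norm_of_nonneg ha, Real.norm_of_nonneg hb]
    have hsq : ‖(a • z₁ + b • z₂) - y‖ ^ 2 ≤ a * ‖z₁ - y‖ ^ 2 + b * ‖z₂ - y‖ ^ 2 := by
      nlinarith [norm_nonneg ((a • z₁ + b • z₂) - y), norm_nonneg (z₁ - y),
        norm_nonneg (z₂ - y), sq_nonneg (‖z₁ - y‖ - ‖z₂ - y‖), mul_nonneg ha hb]
    have hcsq := mul_le_mul_of_nonneg_left hsq hc0
    simp only [hgdef]
    have habf : a * f i xk + b * f i xk = f i xk := by rw [← add_mul, hab, one_mul]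
    nlinarith [hf, hcsq, habf]
  -- the sets for separation
  set C : Set (Fin (m + 1) → ℝ) := {u | ∃ z, ∀ i, g i z - v ≤ u i} with hCdef
  set O : Set (Fin (m + 1) → ℝ) := Set.pi Set.univ (fun _ => Set.Iio (0 : ℝ)) with hOdef
  have hOmem : ∀ u : Fin (m + 1) → ℝ, u ∈ O ↔ ∀ i, u i < 0 := by
    intro u; simp [hOdef, Set.mem_pi]
  have hOopen : IsOpen O := isOpen_set_pi Set.finite_univ (fun i _ => isOpen_Iio)
  have hOconv : Convex ℝ O := convex_pi (fun i _ => convex_Iio 0)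
  have hCconv : Convex ℝ C := by
    rintro u ⟨z₁, hz₁⟩ w ⟨z₂, hz₂⟩ a b ha hb hab
    refine ⟨a • z₁ + b • z₂, fun i => ?_⟩
    have hgi := hgconv i z₁ z₂ a b ha hb hab
    have h1 := mul_le_mul_of_nonneg_left (hz₁ i) ha
    have h2 := mul_le_mul_of_nonneg_left (hz₂ i) hb
    simp only [Pi.add_apply, Pi.smul_apply, smul_eq_mul]
    have habv : a * v + b * v = v := by rw [← add_mul, hab, one_mul]
    nlinarith [hgi, h1, h2, habv]
  have hdisj : Disjoint O C := by
    rw [Set.disjoint_left]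
    rintro u huO ⟨z, hz⟩
    obtain ⟨j, hj⟩ := hvz z
    have := hz j
    have := (hOmem u).1 huO j
    linarith
  have hCne : C.Nonempty := ⟨fun i => g i xp - v, xp, fun i => le_rfl⟩
  have hOne : O.Nonempty := ⟨fun _ => -1, (hOmem _).2 fun i => by norm_num⟩
  obtain ⟨L, u0, hLO, hLC⟩ := geometric_hahn_banach_open hOconv hOopen hCconv hdisj
  set θ' : Fin (m + 1) → ℝ := fun i => L (fun j => if i = j then 1 else 0) with hθ'def
  have hL : ∀ a : Fin (m + 1) → ℝ, L a = ∑ i, a i * θ' i := by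
    intro a
    have := LinearMap.pi_apply_eq_sum_univ (L : (Fin (m + 1) → ℝ) →ₗ[ℝ] ℝ) a
    simpa [hθ'def, smul_eq_mul] using this
  -- θ' is nonnegative
  have hθ'0 : ∀ i, 0 ≤ θ' i := by
    intro j
    by_contra hneg
    push_neg at hneg
    set Lm : ℝ := L (fun _ => (-1 : ℝ)) with hLm
    set q : ℝ := (u0 - Lm + 1) / (-θ' j) with hq
    set t : ℝ := max 0 q with ht
    have ht0 : 0 ≤ t := le_max_left _ _
    set a : Fin (m + 1) → ℝ := fun i => if i = j then -1 - t else -1 with hadef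
    have haO : a ∈ O := by
      refine (hOmem a).2 fun i => ?_
      by_cases hij : i = j <;> simp [hadef, hij] <;> linarith
    have h1 : L a < u0 := hLO a haO
    have hterm : ∀ i, a i * θ' i = (-1) * θ' i + (if i = j then -t * θ' i else 0) := by
      intro i; by_cases hij : i = j <;> simp [hadef, hij] <;> ring
    have h2 : L a = Lm + (-t * θ' j) := by
      rw [hL a, hLm, hL (fun _ => (-1 : ℝ))]
      simp_rw [hterm]
      rw [Finset.sum_add_distrib, Finset.sum_ite_eq' Finset.univ j (fun i => -t * θ' i)]
      simp
    have h3 : t * (-θ' j) ≥ u0 - Lm + 1 := by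
      have hq' : q * (-θ' j) = u0 - Lm + 1 := by
        rw [hq]; exact div_mul_cancel₀ _ (by linarith)
      have : q * (-θ' j) ≤ t * (-θ' j) :=
        mul_le_mul_of_nonneg_right (le_max_right 0 q) (by linarith)
      linarith
    have : -t * θ' j = t * (-θ' j) := by ring
    linarith [h2, h1, h3]
  -- sum of θ' is positive
  set S : ℝ := ∑ i, θ' i with hS
  have hS0 : 0 ≤ S := Finset.sum_nonneg fun i _ => hθ'0 i
  have hSpos : 0 < S := by
    rcases lt_or_eq_of_le hS0 with h | h
    · exact h
    · exfalso
      have hall : ∀ i ∈ Finset.univ, θ' i = 0 := by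
        intro i _
        have := (Finset.sum_eq_zero_iff_of_nonneg fun i _ => hθ'0 i).1 h.symm
        exact this i (Finset.mem_univ i)
      have hLzero : ∀ a : Fin (m + 1) → ℝ, L a = 0 := by
        intro a; rw [hL]
        exact Finset.sum_eq_zero fun i _ => by rw [hall i (Finset.mem_univ i), mul_zero]
      obtain ⟨b, hb⟩ := hCne
      obtain ⟨o, ho⟩ := hOne
      have := hLO o ho
      have := hLC b hb
      rw [hLzero o] at *
      rw [hLzero b] at *
      linarith
  -- u0 ≥ 0
  have hu00 : 0 ≤ u0 := by
    by_contra hcon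
    push_neg at hcon
    set ε : ℝ := -u0 / (2 * S) with hε
    have hε0 : 0 < ε := by
      apply div_pos (by linarith) (by linarith)
    have haO : (fun _ : Fin (m + 1) => -ε) ∈ O := (hOmem _).2 fun i => by simp; linarith
    have h1 := hLO _ haO
    have h2 : L (fun _ : Fin (m + 1) => -ε) = -ε * S := by
      rw [hL, hS, Finset.mul_sum]
    have h3 : -ε * S = u0 / 2 := by
      rw [hε]; field_simp
    rw [h2, h3] at h1
    linarith
  -- define θ
  refine ⟨fun i => θ' i / S, fun i => div_nonneg (hθ'0 i) hS0, ?_, ?_⟩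
  · rw [← Finset.sum_div, ← hS, div_self (ne_of_gt hSpos)]
  · intro z
    -- key: ∑ θ i * g i xp ≤ v ≤ ∑ θ i * g i z
    have hup : ∑ i, (θ' i / S) * g i xp ≤ v := by
      have h1 : ∑ i, (θ' i / S) * g i xp ≤ ∑ i, (θ' i / S) * v :=
        Finset.sum_le_sum fun i _ =>
          mul_le_mul_of_nonneg_left (hgxp i) (div_nonneg (hθ'0 i) hS0)
      have h2 : ∑ i, (θ' i / S) * v = v := by
        rw [← Finset.sum_mul]
        rw [show (∑ i, θ' i / S) = 1 by
          rw [← Finset.sum_div, ← hS, div_self (ne_of_gt hSpos)], one_mul]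
      linarith
    have hdown : v ≤ ∑ i, (θ' i / S) * g i z := by
      have hzC : (fun i => g i z - v) ∈ C := ⟨z, fun i => le_rfl⟩
      have h1 := hLC _ hzC
      rw [hL] at h1
      have h2 : ∑ i, (g i z - v) * θ' i = (∑ i, θ' i * g i z) - v * S := by
        rw [hS, Finset.mul_sum, ← Finset.sum_sub_distrib]
        exact Finset.sum_congr rfl fun i _ => by ring
      have h3 : v * S + u0 ≤ ∑ i, θ' i * g i z := by linarith
      have h4 : v * S ≤ ∑ i, θ' i * g i z := by linarith
      have h5 : ∑ i, (θ' i / S) * g i z = (∑ i, θ' i * g i z) / S := by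
        rw [Finset.sum_div]
        exact Finset.sum_congr rfl fun i _ => by ring
      rw [h5, le_div_iff₀ hSpos]
      linarith
    have hexp : ∀ w : EuclideanSpace ℝ (Fin n),
        ∑ i, (θ' i / S) * g i w
          = (∑ i, (θ' i / S) * (f i w - f i xk)) + c * ‖w - y‖ ^ 2 := by
      intro w
      simp only [hgdef]
      simp_rw [mul_add]
      rw [Finset.sum_add_distrib, ← Finset.sum_mul]
      rw [show (∑ i, θ' i / S) = 1 by
        rw [← Finset.sum_div, ← hS, div_self (ne_of_gt hSpos)], one_mul]
    have e1 := hexp xp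
    have e2 := hexp z
    rw [e1] at hup
    rw [e2] at hdown
    linarith
end

section
/- Let f_i be convex lower semicontinuous, and let {x_k} be generated by MAPG-1: y_k = x_k + ((k−1)/(k+α−1))(x_k − x_{k−1}), x_{k+1} = argmin_z { max_i(f_i(z)−f_i(x_k)) + (1/(2λ_k))‖z−y_k‖² } with λ_k = kβ_k/(k+α−1), β_{k+1} = (k(k+α−1)/(k+1)²)β_k, α ≥ 1, x₀ = x₁. Then for every i and every k ≥ 0, f_i(x_k) ≤ f_i(x₀); i.e., the iterates stay in the level set L(f, f(x₀)). -/
/-!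
Fix `k ≥ 1` and put `g z = maxᵢ (fᵢ z - fᵢ xₖ)`, a convex function with `g xₖ = 0`. The point `xₖ₊₁`
minimises the strongly convex function `g + ‖· - yₖ‖² / (2λₖ)`, so comparing it with `xₖ` (quadratic
growth at a minimiser) gives, for every `i` and with `θₖ = (k - 1) / (k + α - 1)`,
`fᵢ xₖ₊₁ + ‖xₖ₊₁ - xₖ‖² / (2λₖ) ≤ fᵢ xₖ + θₖ² ‖xₖ - xₖ₋₁‖² / (2λₖ)`.
For `α ≥ 1` the step sizes satisfy `θₖ₊₁² / λₖ₊₁ ≤ 1 / λₖ`, which amounts to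
`k² (k + 1) ≤ (k + α - 1)² (k + α)`; hence the energy `fᵢ xₖ₊₁ + ‖xₖ₊₁ - xₖ‖² / (2λₖ)` is nonincreasing,
and since `θ₁ = 0` it is bounded by `fᵢ x₁ = fᵢ x₀`.
-/

open Set Filter Topology

section Convex

variable {E : Type*} [NormedAddCommGroup E]

lemma ConvexOn.finset_sup' {𝕜 F β ι : Type*} [Semiring 𝕜] [PartialOrder 𝕜] [AddCommMonoid F]
    [AddCommMonoid β] [LinearOrder β] [IsOrderedAddMonoid β] [SMul 𝕜 F] [Module 𝕜 β]
    [PosSMulStrictMono 𝕜 β] {s : Set F} {t : Finset ι} (H : t.Nonempty) {f : ι → F → β}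
    (hf : ∀ i ∈ t, ConvexOn 𝕜 s (f i)) :
    ConvexOn 𝕜 s fun x ↦ t.sup' H fun i ↦ f i x := by
  simpa only [← Finset.sup'_apply] using
    Finset.sup'_induction H f (fun _ h₁ _ h₂ ↦ h₁.sup h₂) hf

lemma StrongConvexOn.add_mul_sq_norm_sub_le_of_isMinOn [NormedSpace ℝ E] {s : Set E} {m : ℝ}
    {h : E → ℝ} {p z : E} (hh : StrongConvexOn s m h) (hmin : IsMinOn h s p) (hp : p ∈ s)
    (hz : z ∈ s) : h p + m / 2 * ‖z - p‖ ^ 2 ≤ h z := by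
  set M := m / 2 * ‖z - p‖ ^ 2
  have hshrink : ∀ t ∈ Ioc (0 : ℝ) 1, h p + (1 - t) * M ≤ h z := by
    rintro t ⟨ht₀, ht₁⟩
    have hseg := hh.2 hp hz (sub_nonneg.2 ht₁) ht₀.le (sub_add_cancel 1 t)
    have hmin_seg :=
      isMinOn_iff.1 hmin _ (hh.1 hp hz (sub_nonneg.2 ht₁) ht₀.le (sub_add_cancel 1 t))
    rw [norm_sub_rev, smul_eq_mul, smul_eq_mul] at hseg
    refine le_of_mul_le_mul_left ?_ ht₀
    linear_combination hmin_seg.trans hseg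
  have hlim : Tendsto (fun t : ℝ ↦ h p + (1 - t) * M) (𝓝[>] 0) (𝓝 (h p + M)) := by
    refine ((Continuous.tendsto' ?_ 0 _ (by simp)).mono_left nhdsWithin_le_nhds)
    fun_prop
  exact le_of_tendsto hlim (eventually_of_mem (Ioc_mem_nhdsGT one_pos) hshrink)

lemma ConvexOn.strongConvexOn_add_mul_sq_norm_sub [InnerProductSpace ℝ E] {s : Set E}
    {g : E → ℝ} (hg : ConvexOn ℝ s g) (c : ℝ) (y : E) :
    StrongConvexOn s (2 * c) fun z ↦ g z + c * ‖z - y‖ ^ 2 := by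
  rw [strongConvexOn_iff_convex]
  have haff : ConvexOn ℝ s fun z ↦ (-(2 * c) • innerₛₗ ℝ y) z + c * ‖y‖ ^ 2 :=
    (LinearMap.convexOn _ hg.1).add_const _
  refine (hg.add haff).congr fun z _ ↦ ?_
  simp only [Pi.add_apply, LinearMap.smul_apply, innerₛₗ_apply_apply, smul_eq_mul, norm_sub_sq_real,
    real_inner_comm y z]
  ring

lemma ConvexOn.prox_max_sub_descent {ι : Type*} [InnerProductSpace ℝ E] [Fintype ι] [Nonempty ι]
    {f : ι → E → ℝ} (hf : ∀ i, ConvexOn ℝ univ (f i)) {c : ℝ}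
    (hc : 0 ≤ c) {x y p : E}
    (hmin : ∀ z, (Finset.univ.sup' Finset.univ_nonempty fun i ↦ f i p - f i x) + c * ‖p - y‖ ^ 2
      ≤ (Finset.univ.sup' Finset.univ_nonempty fun i ↦ f i z - f i x) + c * ‖z - y‖ ^ 2)
    (j : ι) : f j p + c * ‖p - x‖ ^ 2 ≤ f j x + c * ‖x - y‖ ^ 2 := by
  set g : E → ℝ := fun z ↦ Finset.univ.sup' Finset.univ_nonempty fun i ↦ f i z - f i x
  have hg : ConvexOn ℝ univ g := ConvexOn.finset_sup' _ fun i _ ↦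
    ((hf i).add_const (-f i x)).congr fun _ _ ↦ (sub_eq_add_neg _ _).symm
  have hthree := (hg.strongConvexOn_add_mul_sq_norm_sub c y).add_mul_sq_norm_sub_le_of_isMinOn
    (isMinOn_univ_iff.2 hmin) (mem_univ p) (mem_univ x)
  have hgx : g x = 0 := by simp only [g, sub_self, Finset.sup'_const]
  have hgp : f j p - f j x ≤ g p := Finset.le_sup' (fun i ↦ f i p - f i x) (Finset.mem_univ j)
  rw [norm_sub_rev x p, mul_div_cancel_left₀ c two_ne_zero, hgx] at hthree
  have : 0 ≤ c * ‖p - y‖ ^ 2 := by positivity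
  linarith

end Convex

lemma add_mul_le_of_inertial_step {F D c θ : ℕ → ℝ} (hD : ∀ k, 0 ≤ D k) (hθ : θ 1 = 0)
    (hc : ∀ k, 1 ≤ k → c (k + 1) * θ (k + 1) ^ 2 ≤ c k)
    (hstep : ∀ k, 1 ≤ k → F (k + 1) + c k * D k ≤ F k + c k * θ k ^ 2 * D (k - 1))
    {k : ℕ} (hk : 1 ≤ k) : F (k + 1) + c k * D k ≤ F 1 := by
  induction k, hk using Nat.le_induction with
  | base => simpa [hθ] using hstep 1 le_rfl
  | succ k hk ih =>
    calc F (k + 1 + 1) + c (k + 1) * D (k + 1)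
        ≤ F (k + 1) + c (k + 1) * θ (k + 1) ^ 2 * D k := hstep (k + 1) (by omega)
      _ ≤ F (k + 1) + c k * D k := by gcongr; exacts [hD k, hc k hk]
      _ ≤ F 1 := ih

structure IsMAPGStepSize (α : ℝ) (β lam : ℕ → ℝ) : Prop where
  one_le_alpha : 1 ≤ α
  beta_one_pos : 0 < β 1
  beta_succ : ∀ k : ℕ, 1 ≤ k →
    β (k + 1) = ((k : ℝ) * ((k : ℝ) + α - 1) / ((k : ℝ) + 1) ^ 2) * β k
  lam_eq : ∀ k : ℕ, 1 ≤ k → lam k = (k : ℝ) * β k / ((k : ℝ) + α - 1)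

namespace IsMAPGStepSize

variable {α : ℝ} {β lam : ℕ → ℝ} {k : ℕ}

lemma beta_pos (hs : IsMAPGStepSize α β lam) (hk : 1 ≤ k) : 0 < β k := by
  induction k, hk using Nat.le_induction with
  | base => exact hs.beta_one_pos
  | succ k hk ih =>
    have hk' : (1 : ℝ) ≤ k := mod_cast hk
    have hα := hs.one_le_alpha
    rw [hs.beta_succ k hk]
    exact mul_pos (div_pos (by nlinarith) (by positivity)) ih

lemma lam_pos (hs : IsMAPGStepSize α β lam) (hk : 1 ≤ k) : 0 < lam k := by
  have hk' : (1 : ℝ) ≤ k := mod_cast hk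
  have hα := hs.one_le_alpha
  rw [hs.lam_eq k hk]
  exact div_pos (mul_pos (by positivity) (hs.beta_pos hk)) (by linarith)

lemma one_div_two_mul_lam_succ_mul_sq_le (hs : IsMAPGStepSize α β lam) (hk : 1 ≤ k) :
    1 / (2 * lam (k + 1)) * ((((k + 1 : ℕ) : ℝ) - 1) / (((k + 1 : ℕ) : ℝ) + α - 1)) ^ 2
      ≤ 1 / (2 * lam k) := by
  have hk' : (1 : ℝ) ≤ k := mod_cast hk
  have hα := hs.one_le_alpha
  have hβk := hs.beta_pos hk
  have hpoly : (k : ℝ) ^ 2 * (k + 1) ≤ (k + α - 1) ^ 2 * (k + α) := by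
    nlinarith [sq_nonneg (α - 1), mul_nonneg (sub_nonneg.2 hα) (sq_nonneg (k : ℝ))]
  have hpos : (0 : ℝ) < k + α - 1 := by linarith
  rw [hs.lam_eq k hk, hs.lam_eq (k + 1) (by omega), hs.beta_succ k hk]
  push_cast
  rw [show (k : ℝ) + 1 - 1 = k by ring, show (k : ℝ) + 1 + α - 1 = k + α by ring]
  have hlhs : 1 / (2 * ((k + 1) * (k * (k + α - 1) / (k + 1) ^ 2 * β k) / (k + α))) *
      ((k : ℝ) / (k + α)) ^ 2 = k * (k + 1) / (2 * (k + α - 1) * (k + α) * β k) := by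
    field_simp
  have hrhs : 1 / (2 * (k * β k / (k + α - 1))) = (k + α - 1) / (2 * k * β k) := by
    field_simp
  rw [hlhs, hrhs, div_le_div_iff₀ (by positivity) (by positivity)]
  nlinarith [mul_le_mul_of_nonneg_left hpoly (by positivity : (0 : ℝ) ≤ 2 * β k)]

end IsMAPGStepSize

theorem stmt_16_general (n m : ℕ) (f : Fin (m + 1) → EuclideanSpace ℝ (Fin n) → ℝ)
    (hconv : ∀ i, ConvexOn ℝ Set.univ (f i))
    (α : ℝ) (hα : 1 ≤ α) (β lam : ℕ → ℝ) (hβ1 : 0 < β 1)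
    (hβ : ∀ k : ℕ, 1 ≤ k →
      β (k + 1) = ((k : ℝ) * ((k : ℝ) + α - 1) / ((k : ℝ) + 1) ^ 2) * β k)
    (hlam : ∀ k : ℕ, 1 ≤ k → lam k = (k : ℝ) * β k / ((k : ℝ) + α - 1))
    (x y : ℕ → EuclideanSpace ℝ (Fin n)) (hx01 : x 0 = x 1)
    (hy : ∀ k : ℕ, 1 ≤ k →
      y k = x k + (((k : ℝ) - 1) / ((k : ℝ) + α - 1)) • (x k - x (k - 1)))
    (hmin : ∀ k : ℕ, 1 ≤ k → ∀ z : EuclideanSpace ℝ (Fin n),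
      (Finset.univ.sup' Finset.univ_nonempty (fun i => f i (x (k + 1)) - f i (x k)))
          + 1 / (2 * lam k) * ‖x (k + 1) - y k‖ ^ 2
        ≤ (Finset.univ.sup' Finset.univ_nonempty (fun i => f i z - f i (x k)))
          + 1 / (2 * lam k) * ‖z - y k‖ ^ 2) :
    ∀ i, ∀ k : ℕ, f i (x k) ≤ f i (x 0) := by
  have hs : IsMAPGStepSize α β lam := ⟨hα, hβ1, hβ, hlam⟩
  have hc : ∀ k, 1 ≤ k → 0 ≤ 1 / (2 * lam k) := fun k hk ↦ by
    have := hs.lam_pos hk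
    positivity
  intro i
  have hstep : ∀ k, 1 ≤ k → f i (x (k + 1)) + 1 / (2 * lam k) * ‖x (k + 1) - x k‖ ^ 2 ≤
      f i (x k) + 1 / (2 * lam k) * (((k : ℝ) - 1) / ((k : ℝ) + α - 1)) ^ 2 *
        ‖x (k - 1 + 1) - x (k - 1)‖ ^ 2 := fun k hk ↦ by
    have h := ConvexOn.prox_max_sub_descent hconv (hc k hk) (hmin k hk) i
    rw [Nat.sub_add_cancel hk, mul_assoc]
    rwa [hy k hk, sub_add_cancel_left, norm_neg, norm_smul, mul_pow, Real.norm_eq_abs,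
      sq_abs] at h
  have henergy := fun k (hk : 1 ≤ k) ↦ add_mul_le_of_inertial_step
    (F := fun k ↦ f i (x k)) (D := fun k ↦ ‖x (k + 1) - x k‖ ^ 2) (c := fun k ↦ 1 / (2 * lam k))
    (θ := fun k : ℕ ↦ ((k : ℝ) - 1) / ((k : ℝ) + α - 1)) (fun _ ↦ sq_nonneg _) (by simp)
    (fun _ hk ↦ hs.one_div_two_mul_lam_succ_mul_sq_le hk) hstep hk
  intro k
  rcases k with _ | _ | k
  · rfl
  · rw [hx01]
  · rw [hx01]
    have := henergy (k + 1) (by omega)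
    have := mul_nonneg (hc (k + 1) (by omega)) (sq_nonneg ‖x (k + 2) - x (k + 1)‖)
    linarith

theorem stmt_16 (n m : ℕ) (f : Fin (m + 1) → EuclideanSpace ℝ (Fin n) → ℝ)
    (hconv : ∀ i, ConvexOn ℝ Set.univ (f i)) (hlsc : ∀ i, LowerSemicontinuous (f i))
    (α : ℝ) (hα : 1 ≤ α) (β lam : ℕ → ℝ) (hβ1 : 0 < β 1)
    (hβ : ∀ k : ℕ, 1 ≤ k →
      β (k + 1) = ((k : ℝ) * ((k : ℝ) + α - 1) / ((k : ℝ) + 1) ^ 2) * β k)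
    (hlam : ∀ k : ℕ, 1 ≤ k → lam k = (k : ℝ) * β k / ((k : ℝ) + α - 1))
    (x y : ℕ → EuclideanSpace ℝ (Fin n)) (hx01 : x 0 = x 1)
    (hy : ∀ k : ℕ, 1 ≤ k →
      y k = x k + (((k : ℝ) - 1) / ((k : ℝ) + α - 1)) • (x k - x (k - 1)))
    (hmin : ∀ k : ℕ, 1 ≤ k → ∀ z : EuclideanSpace ℝ (Fin n),
      (Finset.univ.sup' Finset.univ_nonempty (fun i => f i (x (k + 1)) - f i (x k)))
          + 1 / (2 * lam k) * ‖x (k + 1) - y k‖ ^ 2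
        ≤ (Finset.univ.sup' Finset.univ_nonempty (fun i => f i z - f i (x k)))
          + 1 / (2 * lam k) * ‖z - y k‖ ^ 2) :
    ∀ i, ∀ k : ℕ, f i (x k) ≤ f i (x 0) :=
  stmt_16_general n m f hconv α hα β lam hβ1 hβ hlam x y hx01 hy hmin
end

section
/- Fix z ∈ ℝⁿ and for the MAPG-1 iterates define v_k := (α−1)(x_k − z) + (k−1)(x_k − x_{k−1}) and E_k := k²β_k min_i(f_i(x_k) − f_i(z)) + (1/2)‖v_k‖². Then E_{k+1} ≤ E_k for all k ≥ 1 (in fact E_{k+1} − E_k + (1/2)k²β_k²‖ξ_k‖² ≤ 0 where ξ_k is the subgradient combination from the proximal step). -/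
/-!
With `F_k = min_i (f_i(x_k) - f_i(z))`, the momentum vector satisfies `v_{k+1} = v_k - kβ_k ξ_k`,
so `‖v_{k+1}‖² - ‖v_k‖² = -2kβ_k⟪ξ_k, v_k⟫ + k²β_k²‖ξ_k‖²`. The recurrence for `β` gives
`(k+1)²β_{k+1} = k²β_k + k(α-1)β_k`, and the subgradient inequality at `x_{k+1}`, averaged
with the weights `θ`, bounds `F_{k+1} - F_k` by `⟪ξ_k, x_{k+1} - x_k⟫` and `F_{k+1}` by
`⟪ξ_k, x_{k+1} - z⟫`. Combining these, the potential gap is at most `kβ_k⟪ξ_k, v_{k+1}⟫`,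
which is `kβ_k⟪ξ_k, v_k⟫ - k²β_k²‖ξ_k‖²`, and everything cancels except `-½k²β_k²‖ξ_k‖²`.
-/

open Finset
open scoped RealInnerProductSpace

section Weights

variable {ι : Type*} {s : Finset ι}

lemma Finset.inf'_le_sum_mul (H : s.Nonempty) (g θ : ι → ℝ) (hθ₀ : ∀ i ∈ s, 0 ≤ θ i)
    (hθ₁ : ∑ i ∈ s, θ i = 1) : s.inf' H g ≤ ∑ i ∈ s, θ i * g i :=
  calc s.inf' H g = ∑ i ∈ s, θ i * s.inf' H g := by rw [← sum_mul, hθ₁, one_mul]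
    _ ≤ ∑ i ∈ s, θ i * g i :=
      sum_le_sum fun i hi => mul_le_mul_of_nonneg_left (inf'_le g hi) (hθ₀ i hi)

lemma Finset.inf'_sub_inf'_le_sup'_sub (H : s.Nonempty) (a b c : ι → ℝ) :
    s.inf' H (fun i => a i - c i) - s.inf' H (fun i => b i - c i)
      ≤ s.sup' H (fun i => a i - b i) := by
  obtain ⟨j, hj, hmin⟩ := exists_mem_eq_inf' H (fun i => b i - c i)
  have ha := inf'_le (fun i => a i - c i) hj
  have hab := le_sup' (fun i => a i - b i) hj
  rw [hmin]
  linarith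

variable {E : Type*} [NormedAddCommGroup E] [InnerProductSpace ℝ E]

lemma sum_mul_sub_le_inner_sum_smul (f : ι → E → ℝ) (g : ι → E) (θ : ι → ℝ) (p w : E)
    (hθ : ∀ i ∈ s, 0 ≤ θ i) (hg : ∀ i ∈ s, f i p + ⟪g i, w - p⟫ ≤ f i w) :
    ∑ i ∈ s, θ i * (f i p - f i w) ≤ ⟪∑ i ∈ s, θ i • g i, p - w⟫ := by
  rw [sum_inner]
  refine sum_le_sum fun i hi => ?_
  rw [real_inner_smul_left]
  refine mul_le_mul_of_nonneg_left ?_ (hθ i hi)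
  have h := hg i hi
  rw [← neg_sub p w, inner_neg_right] at h
  linarith

end Weights

lemma pos_of_recurrence {α : ℝ} (hα : 0 < α) {β : ℕ → ℝ} (h₁ : 0 < β 1)
    (hβ : ∀ k : ℕ, 1 ≤ k → β (k + 1) = ((k : ℝ) * ((k : ℝ) + α - 1) / ((k : ℝ) + 1) ^ 2) * β k) :
    ∀ k : ℕ, 1 ≤ k → 0 < β k := by
  intro k hk
  induction k, hk using Nat.le_induction with
  | base => exact h₁
  | succ j hj ih =>
    have hj₁ : (1 : ℝ) ≤ j := by exact_mod_cast hj
    rw [hβ j hj]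
    exact mul_pos (div_pos (mul_pos (by linarith) (by linarith)) (by positivity)) ih

section Iteration

variable {E : Type*} [NormedAddCommGroup E] [InnerProductSpace ℝ E]

lemma momentum_step {k α β lam : ℝ} (hlam₀ : lam ≠ 0) (hkα : k + α - 1 ≠ 0)
    {x₀ x₁ x₂ y z ξ : E} (hy : y = x₁ + ((k - 1) / (k + α - 1)) • (x₁ - x₀))
    (hlam : lam = k * β / (k + α - 1)) (hopt : ξ + (1 / lam) • (x₂ - y) = 0) :
    (α - 1) • (x₂ - z) + k • (x₂ - x₁)
      = (α - 1) • (x₁ - z) + (k - 1) • (x₁ - x₀) - (k * β) • ξ := by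
  rw [add_comm, ← eq_neg_iff_add_eq_zero, one_div, inv_smul_eq_iff₀ hlam₀,
    sub_eq_iff_eq_add] at hopt
  rw [hopt, hy, hlam]
  match_scalars <;> field_simp <;> ring

lemma energy_descent {k α b b' F₀ F₁ : ℝ} (hk : 0 ≤ k) (hα : 1 ≤ α) (hb : 0 ≤ b)
    (hb' : b' = k * (k + α - 1) / (k + 1) ^ 2 * b) {x₀ x₁ z ξ v₀ v₁ : E}
    (hv₁ : v₁ = (α - 1) • (x₁ - z) + k • (x₁ - x₀)) (hstep : v₁ = v₀ - (k * b) • ξ)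
    (hF : F₁ - F₀ ≤ ⟪ξ, x₁ - x₀⟫) (hF₁ : F₁ ≤ ⟪ξ, x₁ - z⟫) :
    ((k + 1) ^ 2 * b' * F₁ + 1 / 2 * ‖v₁‖ ^ 2) - (k ^ 2 * b * F₀ + 1 / 2 * ‖v₀‖ ^ 2)
      + 1 / 2 * (k * b) ^ 2 * ‖ξ‖ ^ 2 ≤ 0 := by
  have hcoef : (k + 1) ^ 2 * b' = k ^ 2 * b + k * (α - 1) * b := by
    rw [hb']
    field_simp
    ring
  have hnorm : ‖v₁‖ ^ 2 = ‖v₀‖ ^ 2 - 2 * (k * b) * ⟪ξ, v₀⟫ + (k * b) ^ 2 * ‖ξ‖ ^ 2 := by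
    rw [hstep, norm_sub_sq_real, real_inner_smul_right, real_inner_comm, norm_smul, mul_pow,
      Real.norm_eq_abs, sq_abs]
    ring
  have hinner : (α - 1) * ⟪ξ, x₁ - z⟫ + k * ⟪ξ, x₁ - x₀⟫ = ⟪ξ, v₀⟫ - k * b * ‖ξ‖ ^ 2 := by
    rw [← real_inner_smul_right, ← real_inner_smul_right, ← inner_add_right, ← hv₁, hstep,
      inner_sub_right, real_inner_smul_right, real_inner_self_eq_norm_sq]
  have hgap := mul_le_mul_of_nonneg_left hF (by positivity : 0 ≤ k ^ 2 * b)
  have hval := mul_le_mul_of_nonneg_left hF₁ (mul_nonneg (mul_nonneg hk (sub_nonneg.2 hα)) hb)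
  rw [hcoef, hnorm]
  linear_combination hgap + hval + k * b * hinner

end Iteration

theorem stmt_18_general (n m : ℕ) (f : Fin (m + 1) → EuclideanSpace ℝ (Fin n) → ℝ)
    (α : ℝ) (hα : 1 ≤ α) (β lam : ℕ → ℝ) (hβ1 : 0 < β 1)
    (hβ : ∀ k : ℕ, 1 ≤ k →
      β (k + 1) = ((k : ℝ) * ((k : ℝ) + α - 1) / ((k : ℝ) + 1) ^ 2) * β k)
    (hlam : ∀ k : ℕ, 1 ≤ k → lam k = (k : ℝ) * β k / ((k : ℝ) + α - 1))
    (x y : ℕ → EuclideanSpace ℝ (Fin n))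
    (hy : ∀ k : ℕ, 1 ≤ k →
      y k = x k + (((k : ℝ) - 1) / ((k : ℝ) + α - 1)) • (x k - x (k - 1)))
    (θ : ℕ → Fin (m + 1) → ℝ)
    (hθ0 : ∀ k i, 0 ≤ θ k i) (hθ1 : ∀ k : ℕ, ∑ i, θ k i = 1)
    (ξi : ℕ → Fin (m + 1) → EuclideanSpace ℝ (Fin n))
    (hsub : ∀ k : ℕ, 1 ≤ k → ∀ i, ∀ v : EuclideanSpace ℝ (Fin n),
      f i (x (k + 1)) + (inner ℝ (ξi k i) (v - x (k + 1)) : ℝ) ≤ f i v)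
    (ξ : ℕ → EuclideanSpace ℝ (Fin n))
    (hξ : ∀ k : ℕ, 1 ≤ k → ξ k = ∑ i, θ k i • ξi k i)
    (hopt : ∀ k : ℕ, 1 ≤ k → ξ k + (1 / lam k) • (x (k + 1) - y k) = 0)
    (hmaxsum : ∀ k : ℕ, 1 ≤ k →
      (Finset.univ.sup' Finset.univ_nonempty (fun i => f i (x (k + 1)) - f i (x k)))
        = ∑ i, θ k i * (f i (x (k + 1)) - f i (x k)))
    (z : EuclideanSpace ℝ (Fin n))
    (v : ℕ → EuclideanSpace ℝ (Fin n))
    (hv : ∀ k : ℕ, v k = (α - 1) • (x k - z) + ((k : ℝ) - 1) • (x k - x (k - 1)))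
    (E : ℕ → ℝ)
    (hE : ∀ k : ℕ, E k = (k : ℝ) ^ 2 * β k *
        (Finset.univ.inf' Finset.univ_nonempty (fun i => f i (x k) - f i z))
        + (1 / 2) * ‖v k‖ ^ 2) :
    ∀ k : ℕ, 1 ≤ k →
      E (k + 1) - E k + (1 / 2) * (k : ℝ) ^ 2 * (β k) ^ 2 * ‖ξ k‖ ^ 2 ≤ 0 ∧
      E (k + 1) ≤ E k := by
  intro k hk
  have hk₁ : (1 : ℝ) ≤ k := by exact_mod_cast hk
  have hβk : 0 < β k := pos_of_recurrence (by linarith) hβ1 hβ k hk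
  have hkα : 0 < (k : ℝ) + α - 1 := by linarith
  have hlamk : lam k ≠ 0 := by
    rw [hlam k hk]
    exact (div_pos (by positivity) hkα).ne'
  have hv₁ : v (k + 1) = (α - 1) • (x (k + 1) - z) + (k : ℝ) • (x (k + 1) - x k) := by
    simp only [hv, Nat.cast_add_one, add_sub_cancel_right, Nat.add_sub_cancel]
  have hstep : v (k + 1) = v k - (k * β k) • ξ k := by
    rw [hv₁, hv k, momentum_step hlamk hkα.ne' (hy k hk) (hlam k hk) (hopt k hk)]
  have hsubgrad w := hξ k hk ▸ sum_mul_sub_le_inner_sum_smul f (ξi k) (θ k) (x (k + 1)) w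
    (fun i _ => hθ0 k i) (fun i _ => hsub k hk i w)
  have hF := (inf'_sub_inf'_le_sup'_sub univ_nonempty (fun i => f i (x (k + 1)))
    (fun i => f i (x k)) (fun i => f i z)).trans ((hmaxsum k hk).trans_le (hsubgrad (x k)))
  have hF₁ := (inf'_le_sum_mul univ_nonempty _ (θ k) (fun i _ => hθ0 k i) (hθ1 k)).trans
    (hsubgrad z)
  have hdesc := energy_descent (by positivity) hα hβk.le (hβ k hk) hv₁ hstep hF hF₁
  have hdecay : E (k + 1) - E k + 1 / 2 * (k : ℝ) ^ 2 * β k ^ 2 * ‖ξ k‖ ^ 2 ≤ 0 := by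
    rw [hE, hE]
    push_cast
    linarith
  have hpen : 0 ≤ 1 / 2 * (k : ℝ) ^ 2 * β k ^ 2 * ‖ξ k‖ ^ 2 := by positivity
  exact ⟨hdecay, by linarith⟩

theorem stmt_18 (n m : ℕ) (f : Fin (m + 1) → EuclideanSpace ℝ (Fin n) → ℝ)
    (hconv : ∀ i, ConvexOn ℝ Set.univ (f i)) (hlsc : ∀ i, LowerSemicontinuous (f i))
    (α : ℝ) (hα : 1 ≤ α) (β lam : ℕ → ℝ) (hβ1 : 0 < β 1)
    (hβ : ∀ k : ℕ, 1 ≤ k →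
      β (k + 1) = ((k : ℝ) * ((k : ℝ) + α - 1) / ((k : ℝ) + 1) ^ 2) * β k)
    (hlam : ∀ k : ℕ, 1 ≤ k → lam k = (k : ℝ) * β k / ((k : ℝ) + α - 1))
    (x y : ℕ → EuclideanSpace ℝ (Fin n)) (hx01 : x 0 = x 1)
    (hy : ∀ k : ℕ, 1 ≤ k →
      y k = x k + (((k : ℝ) - 1) / ((k : ℝ) + α - 1)) • (x k - x (k - 1)))
    (hmin : ∀ k : ℕ, 1 ≤ k → ∀ w : EuclideanSpace ℝ (Fin n),
      (Finset.univ.sup' Finset.univ_nonempty (fun i => f i (x (k + 1)) - f i (x k)))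
          + 1 / (2 * lam k) * ‖x (k + 1) - y k‖ ^ 2
        ≤ (Finset.univ.sup' Finset.univ_nonempty (fun i => f i w - f i (x k)))
          + 1 / (2 * lam k) * ‖w - y k‖ ^ 2)
    (θ : ℕ → Fin (m + 1) → ℝ)
    (hθ0 : ∀ k i, 0 ≤ θ k i) (hθ1 : ∀ k : ℕ, ∑ i, θ k i = 1)
    (ξi : ℕ → Fin (m + 1) → EuclideanSpace ℝ (Fin n))
    (hsub : ∀ k : ℕ, 1 ≤ k → ∀ i, ∀ v : EuclideanSpace ℝ (Fin n),
      f i (x (k + 1)) + (inner ℝ (ξi k i) (v - x (k + 1)) : ℝ) ≤ f i v)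
    (ξ : ℕ → EuclideanSpace ℝ (Fin n))
    (hξ : ∀ k : ℕ, 1 ≤ k → ξ k = ∑ i, θ k i • ξi k i)
    (hopt : ∀ k : ℕ, 1 ≤ k → ξ k + (1 / lam k) • (x (k + 1) - y k) = 0)
    (hmaxsum : ∀ k : ℕ, 1 ≤ k →
      (Finset.univ.sup' Finset.univ_nonempty (fun i => f i (x (k + 1)) - f i (x k)))
        = ∑ i, θ k i * (f i (x (k + 1)) - f i (x k)))
    (z : EuclideanSpace ℝ (Fin n))
    (v : ℕ → EuclideanSpace ℝ (Fin n))
    (hv : ∀ k : ℕ, v k = (α - 1) • (x k - z) + ((k : ℝ) - 1) • (x k - x (k - 1)))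
    (E : ℕ → ℝ)
    (hE : ∀ k : ℕ, E k = (k : ℝ) ^ 2 * β k *
        (Finset.univ.inf' Finset.univ_nonempty (fun i => f i (x k) - f i z))
        + (1 / 2) * ‖v k‖ ^ 2) :
    ∀ k : ℕ, 1 ≤ k →
      E (k + 1) - E k + (1 / 2) * (k : ℝ) ^ 2 * (β k) ^ 2 * ‖ξ k‖ ^ 2 ≤ 0 ∧
      E (k + 1) ≤ E k :=
  stmt_18_general n m f α hα β lam hβ1 hβ hlam x y hy θ hθ0 hθ1 ξi hsub ξ hξ hopt hmaxsum z v hv E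
    hE
end

section
/- Let t₀ > 0, α > 1, and h : [t₀, ∞) → ℝ continuously differentiable, bounded below, twice differentiable a.e., satisfying t h''(t) + α h'(t) ≤ g(t) for almost all t ≥ t₀, where g ∈ L¹([t₀,∞)) is nonnegative. Then lim_{t→∞} h(t) exists (and is finite). -/
/-!
Multiplying the inequality by `t ^ (α - 1)` gives `(t ^ α h')' ≤ t ^ (α - 1) g`, so
`t ^ α h'(t) ≤ t₀ ^ α h'(t₀) + ∫_{t₀}^t s ^ (α - 1) g(s) ds`. Dividing by `t ^ α` and integrating by
parts against `t ^ (1 - α) / (1 - α)` bounds `∫_{t₀}^∞ (h')⁺` by a multiple of `∫_{t₀}^∞ t ^ (-α)`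
plus `‖g‖₁ / (α - 1)`. Then `h(t) - ∫_{t₀}^t (h')⁺` is nonincreasing and bounded below, and both
terms converge.
-/

open MeasureTheory Set Filter Topology

lemma IntervalIntegrable.rpow_mul {a b α : ℝ} {g : ℝ → ℝ} (ha : 0 < a) (hb : 0 < b)
    (hg : IntervalIntegrable g volume a b) :
    IntervalIntegrable (fun t => t ^ α * g t) volume a b :=
  hg.continuousOn_mul
    (continuousOn_id.rpow_const fun _ ht => Or.inl ((lt_min ha hb).trans_le ht.1).ne')

lemma rpow_mul_le_add_integral {a b α : ℝ} {u u' g : ℝ → ℝ} (ha : 0 < a) (hab : a ≤ b)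
    (hu' : IntervalIntegrable u' volume a b) (hu : ∀ t ∈ Icc a b, u t = u a + ∫ s in a..t, u' s)
    (hg : IntervalIntegrable g volume a b)
    (hineq : ∀ᵐ t, t ∈ Icc a b → t * u' t + α * u t ≤ g t) :
    b ^ α * u b ≤ a ^ α * u a + ∫ t in a..b, t ^ (α - 1) * g t := by
  set v : ℝ → ℝ := fun t => u a + ∫ s in a..t, u' s
  have hpos : ∀ t ∈ uIcc a b, 0 < t := fun t ht => ha.trans_le (uIcc_of_le hab ▸ ht).1
  have hv : AbsolutelyContinuousOnInterval v a b :=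
    (LipschitzWith.const (u a)).lipschitzOnWith.absolutelyContinuousOnInterval.add
      (hu'.absolutelyContinuousOnInterval_intervalIntegral left_mem_uIcc)
  have hpow : AbsolutelyContinuousOnInterval (fun t : ℝ => t ^ α) a b :=
    (contDiffOn_id.rpow_const_of_ne fun t ht => (hpos t ht).ne').absolutelyContinuousOnInterval
  have hφ := hpow.fun_mul hv
  have hderiv : ∀ᵐ t ∂volume.restrict (Icc a b),
      deriv (fun t => t ^ α * v t) t ≤ t ^ (α - 1) * g t := by
    rw [ae_restrict_iff' measurableSet_Icc]
    filter_upwards [hu'.ae_hasDerivAt_integral, hineq] with t hder hin ht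
    have ht' : t ∈ uIcc a b := uIcc_of_le hab ▸ ht
    have hvt : HasDerivAt v (u' t) t := (hder ht' a left_mem_uIcc).const_add (u a)
    have hφt : HasDerivAt (fun t => t ^ α * v t) (α * t ^ (α - 1) * v t + t ^ α * u' t) t :=
      (Real.hasDerivAt_rpow_const (Or.inl (hpos t ht').ne')).mul hvt
    have hpow_succ : t ^ α = t ^ (α - 1) * t := by
      rw [← Real.rpow_add_one (hpos t ht').ne']; ring_nf
    calc deriv (fun t => t ^ α * v t) t
        = t ^ (α - 1) * (t * u' t + α * u t) := by
          rw [hφt.deriv, hpow_succ, show v t = u t from (hu t ht).symm]; ring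
      _ ≤ t ^ (α - 1) * g t :=
        mul_le_mul_of_nonneg_left (hin ht) (Real.rpow_nonneg (hpos t ht').le _)
  have hgα : IntervalIntegrable (fun t => t ^ (α - 1) * g t) volume a b :=
    hg.rpow_mul ha (ha.trans_le hab)
  have := intervalIntegral.integral_mono_ae_restrict hab hφ.intervalIntegrable_deriv hgα hderiv
  rw [hφ.integral_deriv_eq_sub] at this
  simp only [v, intervalIntegral.integral_same, add_zero, ← hu b ⟨hab, le_rfl⟩] at this
  linarith

lemma integral_rpow_neg_mul_integral_le {a b α : ℝ} {g : ℝ → ℝ} (ha : 0 < a) (hab : a ≤ b)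
    (hα : 1 < α) (hg0 : ∀ t, 0 ≤ g t) (hg : IntervalIntegrable g volume a b) :
    ∫ t in a..b, t ^ (-α) * ∫ s in a..t, s ^ (α - 1) * g s ≤ (∫ t in a..b, g t) / (α - 1) := by
  set G : ℝ → ℝ := fun t => ∫ s in a..t, s ^ (α - 1) * g s
  set ψ : ℝ → ℝ := fun t => t ^ (1 - α) / (1 - α)
  have hpos : ∀ t ∈ uIcc a b, 0 < t := fun t ht => ha.trans_le (uIcc_of_le hab ▸ ht).1
  have hgα : IntervalIntegrable (fun t => t ^ (α - 1) * g t) volume a b :=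
    hg.rpow_mul ha (ha.trans_le hab)
  have hG : AbsolutelyContinuousOnInterval G a b :=
    hgα.absolutelyContinuousOnInterval_intervalIntegral left_mem_uIcc
  have hψ : AbsolutelyContinuousOnInterval ψ a b :=
    ((contDiffOn_id.rpow_const_of_ne fun t ht => (hpos t ht).ne').div_const
      _).absolutelyContinuousOnInterval
  have hderivψ : ∀ t ∈ uIcc a b, deriv ψ t = t ^ (-α) := by
    intro t ht
    have := ((Real.hasDerivAt_rpow_const (p := 1 - α) (Or.inl (hpos t ht).ne')).div_const
      (1 - α)).deriv
    rw [this, show 1 - α - 1 = -α by ring, mul_div_cancel_left₀ _ (by linarith : (1:ℝ) - α ≠ 0)]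
  have hderivG : ∀ᵐ t, t ∈ uIoc a b → deriv G t * ψ t = g t / (1 - α) := by
    filter_upwards [hgα.ae_hasDerivAt_integral] with t hder ht
    have ht' := uIoc_subset_uIcc ht
    have hcancel : t ^ (α - 1) * t ^ (1 - α) = 1 := by
      rw [← Real.rpow_add (hpos t ht'), show α - 1 + (1 - α) = 0 by ring, Real.rpow_zero]
    calc deriv G t * ψ t = t ^ (α - 1) * t ^ (1 - α) * g t / (1 - α) := by
          rw [(hder ht' a left_mem_uIcc).deriv]; ring
      _ = g t / (1 - α) := by rw [hcancel, one_mul]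
  have hparts := hG.integral_mul_deriv_eq_deriv_mul hψ
  rw [intervalIntegral.integral_congr fun t ht => by rw [hderivψ t ht, mul_comm],
    intervalIntegral.integral_congr_ae hderivG, intervalIntegral.integral_div] at hparts
  have hGψ : G b * ψ b ≤ 0 :=
    mul_nonpos_of_nonneg_of_nonpos
      (intervalIntegral.integral_nonneg hab fun s hs =>
        mul_nonneg (Real.rpow_nonneg (ha.le.trans hs.1) _) (hg0 s))
      (div_nonpos_of_nonneg_of_nonpos (Real.rpow_nonneg (hpos b right_mem_uIcc).le _)
        (by linarith))
  have hflip : -((∫ t in a..b, g t) / (1 - α)) = (∫ t in a..b, g t) / (α - 1) := by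
    rw [← div_neg, neg_sub]
  simp only [G, intervalIntegral.integral_same, zero_mul, sub_zero] at hparts hGψ
  rw [hparts, ← hflip]
  linarith

lemma integrableOn_Ioi_rpow_neg_mul_integral {a α : ℝ} {g : ℝ → ℝ} (ha : 0 < a) (hα : 1 < α)
    (hg0 : ∀ t, 0 ≤ g t) (hg : IntegrableOn g (Ioi a)) :
    IntegrableOn (fun t => t ^ (-α) * ∫ s in a..t, s ^ (α - 1) * g s) (Ioi a) := by
  have hgT : ∀ T, a ≤ T → IntervalIntegrable g volume a T := fun T haT =>
    (intervalIntegrable_iff_integrableOn_Ioc_of_le haT).2 (hg.mono_set Ioc_subset_Ioi_self)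
  refine integrableOn_Ioi_of_intervalIntegral_norm_bounded ((∫ t in Ioi a, g t) / (α - 1)) a
    (fun T => ?_) tendsto_id ?_
  · rcases le_or_gt a T with haT | hTa
    · have hG := intervalIntegral.continuousOn_primitive_interval'
        ((hgT T haT).rpow_mul (α := α - 1) ha (ha.trans_le haT)) left_mem_uIcc
      rw [uIcc_of_le haT] at hG
      refine ContinuousOn.integrableOn_Icc ?_ |>.mono_set Ioc_subset_Icc_self
      exact (continuousOn_id.rpow_const fun t ht => Or.inl (ha.trans_le ht.1).ne').mul hG
    · simp [Ioc_eq_empty_of_le hTa.le]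
  · filter_upwards [eventually_ge_atTop a] with T hT
    have hnorm : ∫ t in a..T, ‖t ^ (-α) * ∫ s in a..t, s ^ (α - 1) * g s‖
        = ∫ t in a..T, t ^ (-α) * ∫ s in a..t, s ^ (α - 1) * g s := by
      refine intervalIntegral.integral_congr fun t ht => Real.norm_of_nonneg ?_
      have hat : a ≤ t := (uIcc_of_le hT ▸ ht).1
      exact mul_nonneg (Real.rpow_nonneg (ha.le.trans hat) _)
        (intervalIntegral.integral_nonneg hat
          fun s hs => mul_nonneg (Real.rpow_nonneg (ha.le.trans hs.1) _) (hg0 s))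
    rw [id, hnorm]
    refine (integral_rpow_neg_mul_integral_le ha hT hα hg0 (hgT T hT)).trans ?_
    gcongr
    rw [intervalIntegral.integral_of_le hT]
    exact setIntegral_mono_set hg (.of_forall hg0) Ioc_subset_Ioi_self.eventuallyLE

lemma integrableOn_Ioi_max_of_rpow_mul_le {a α : ℝ} {u g : ℝ → ℝ} (ha : 0 < a) (hα : 1 < α)
    (hu : ContinuousOn u (Ici a)) (hg0 : ∀ t, 0 ≤ g t) (hg : IntegrableOn g (Ioi a))
    (hbound : ∀ t ∈ Ici a, t ^ α * u t ≤ a ^ α * u a + ∫ s in a..t, s ^ (α - 1) * g s) :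
    IntegrableOn (fun t => max (u t) 0) (Ioi a) := by
  refine Integrable.mono' (((integrableOn_Ioi_rpow_of_lt (by linarith : -α < -1) ha).const_mul
    |a ^ α * u a|).add (integrableOn_Ioi_rpow_neg_mul_integral ha hα hg0 hg))
    (((hu.mono Ioi_subset_Ici_self).sup continuousOn_const).aestronglyMeasurable
      measurableSet_Ioi) ?_
  filter_upwards [ae_restrict_mem measurableSet_Ioi] with t ht
  have ht0 : 0 < t := ha.trans ht
  have hG : 0 ≤ ∫ s in a..t, s ^ (α - 1) * g s := intervalIntegral.integral_nonneg ht.le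
    fun s hs => mul_nonneg (Real.rpow_nonneg (ha.le.trans hs.1) _) (hg0 s)
  have hut : u t ≤ t ^ (-α) * (|a ^ α * u a| + ∫ s in a..t, s ^ (α - 1) * g s) := by
    rw [Real.rpow_neg ht0.le, ← div_eq_inv_mul, le_div_iff₀ (by positivity), mul_comm]
    exact (hbound t (Ioi_subset_Ici_self ht)).trans (by gcongr; exact le_abs_self _)
  rw [Real.norm_of_nonneg (le_max_right _ _), Pi.add_apply, mul_comm |_|, ← mul_add]
  exact max_le hut (by positivity)

lemma exists_tendsto_of_bddBelow_of_integrableOn_max_deriv {f f' : ℝ → ℝ} {a : ℝ}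
    (hf : ∀ t ∈ Ici a, HasDerivAt f (f' t) t) (hf' : ContinuousOn f' (Ici a))
    (hbdd : BddBelow (f '' Ici a)) (hint : IntegrableOn (fun t => max (f' t) 0) (Ioi a)) :
    ∃ l, Tendsto f atTop (𝓝 l) := by
  obtain ⟨m, hm⟩ := hbdd
  set p : ℝ → ℝ := fun t => max (f' t) 0
  have hp : ∀ t, a ≤ t → IntervalIntegrable p volume a t := fun t ht =>
    (intervalIntegrable_iff_integrableOn_Ioc_of_le ht).2 (hint.mono_set Ioc_subset_Ioi_self)
  have hF : ∀ t, a ≤ t → ∫ s in a..t, p s ≤ ∫ s in Ioi a, p s := fun t ht => by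
    rw [intervalIntegral.integral_of_le ht]
    exact setIntegral_mono_set hint (.of_forall fun s => le_max_right _ _)
      Ioc_subset_Ioi_self.eventuallyLE
  -- `f - ∫ p` has derivative `f' - max f' 0 ≤ 0`; precomposing with `max · a` makes it antitone
  set H : ℝ → ℝ := fun t => f (max t a) - ∫ s in a..max t a, p s
  have hH : Antitone H := by
    intro s t hst
    set s' := max s a
    set t' := max t a
    have hst' : s' ≤ t' := max_le_max hst le_rfl
    have hsub : Icc s' t' ⊆ Ici a := fun x hx => (le_max_right s a).trans hx.1
    have hftc : f t' - f s' = ∫ x in s'..t', f' x :=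
      (intervalIntegral.integral_eq_sub_of_hasDerivAt
        (fun x hx => hf x (hsub (uIcc_of_le hst' ▸ hx)))
        ((hf'.mono hsub).intervalIntegrable_of_Icc hst')).symm
    have hle : ∫ x in s'..t', f' x ≤ ∫ x in s'..t', p x :=
      intervalIntegral.integral_mono_on hst' ((hf'.mono hsub).intervalIntegrable_of_Icc hst')
        (((hf'.mono hsub).sup continuousOn_const).intervalIntegrable_of_Icc hst')
        fun x _ => le_max_left _ _
    have hsplit := intervalIntegral.integral_interval_sub_left (hp t' (le_max_right t a))
      (hp s' (le_max_right s a))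
    simp only [H]
    linarith
  have hHbdd : BddBelow (range H) := ⟨m - ∫ s in Ioi a, p s, by
    rintro _ ⟨t, rfl⟩
    have := hm ⟨max t a, le_max_right t a, rfl⟩
    have := hF (max t a) (le_max_right t a)
    simp only [H]
    linarith⟩
  refine ⟨_, ((tendsto_atTop_ciInf hH hHbdd).add
    ((intervalIntegral_tendsto_integral_Ioi a hint tendsto_id).comp
      (tendsto_atTop_mono (fun t => le_max_left t a) tendsto_id))).congr' ?_⟩
  filter_upwards [eventually_ge_atTop a] with t ht
  simp [H, max_eq_left ht]

lemma nonpos_of_ae_le_of_integrableOn_Ioi {a c : ℝ} {g : ℝ → ℝ} (hg : IntegrableOn g (Ioi a))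
    (hc : ∀ᵐ t ∂volume.restrict (Ioi a), c ≤ g t) : c ≤ 0 := by
  by_contra! hpos
  have hint : IntegrableOn (fun _ => c) (Ioi a) :=
    hg.mono' aestronglyMeasurable_const
      (hc.mono fun t ht => (Real.norm_of_nonneg hpos.le).trans_le ht)
  simp [integrableOn_const_iff, hpos.ne'] at hint

lemma nonpos_of_eqOn_Ici_of_ae_le {T α c : ℝ} {u u' g : ℝ → ℝ} (hα : 0 < α)
    (hu : ∀ t ∈ Ici T, u t = c)
    (hu' : ∀ᵐ t ∂volume.restrict (Ioi T), HasDerivAt u (u' t) t)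
    (hg : IntegrableOn g (Ioi T))
    (hineq : ∀ᵐ t ∂volume.restrict (Ioi T), t * u' t + α * u t ≤ g t) : c ≤ 0 := by
  refine nonpos_of_mul_nonpos_right (nonpos_of_ae_le_of_integrableOn_Ioi hg ?_) hα
  filter_upwards [hu', hineq, ae_restrict_mem measurableSet_Ioi] with t hderiv hle ht
  have hconst : u =ᶠ[𝓝 t] fun _ => c :=
    eventually_of_mem (Ioi_mem_nhds ht) fun s hs => hu s (Ioi_subset_Ici_self hs)
  rw [hderiv.unique ((hasDerivAt_const t c).congr_of_eventuallyEq hconst),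
    hu t (Ioi_subset_Ici_self ht)] at hle
  linarith

theorem stmt_19 (t₀ : ℝ) (ht₀ : 0 < t₀) (α : ℝ) (hα : 1 < α)
    (h h' h'' g : ℝ → ℝ)
    (hbd : BddBelow (h '' Set.Ici t₀))
    (hd : ∀ t ∈ Set.Ici t₀, HasDerivAt h (h' t) t)
    (hc : ContinuousOn h' (Set.Ici t₀))
    (hfund : ∀ t ∈ Set.Ici t₀, h' t = h' t₀ + ∫ s in t₀..t, h'' s)
    (hae : ∀ᵐ t ∂(volume.restrict (Set.Ici t₀)), HasDerivAt h' (h'' t) t)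
    (hg0 : ∀ t, 0 ≤ g t)
    (hgint : IntegrableOn g (Set.Ici t₀))
    (hineq : ∀ᵐ t ∂(volume.restrict (Set.Ici t₀)), t * h'' t + α * h' t ≤ g t) :
    ∃ l : ℝ, Filter.Tendsto h Filter.atTop (nhds l) := by
  by_cases hA : ∀ T, t₀ ≤ T → IntervalIntegrable h'' volume t₀ T
  · refine exists_tendsto_of_bddBelow_of_integrableOn_max_deriv hd hc hbd
      (integrableOn_Ioi_max_of_rpow_mul_le ht₀ hα hc hg0 (hgint.mono_set Ioi_subset_Ici_self)
        fun T hT => rpow_mul_le_add_integral ht₀ hT (hA T hT) (fun t ht => hfund t ht.1) ?_ ?_)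
    · exact (hgint.mono_set (uIcc_of_le (mem_Ici.1 hT) ▸ Icc_subset_Ici_self)).intervalIntegrable
    · exact ((ae_restrict_iff' measurableSet_Ici).1 hineq).mono fun t ht htT => ht htT.1
  -- once `h''` fails to be integrable on `[t₀, T]`, the junk value `0` of its integral makes `h'`
  -- constant on `[T, ∞)`
  push Not at hA
  obtain ⟨T, hT, hT''⟩ := hA
  have hconst : ∀ t ∈ Ici T, h' t = h' t₀ := fun t ht => by
    rw [hfund t (hT.trans ht), intervalIntegral.integral_undef fun hint =>
      hT'' (hint.mono_set (uIcc_subset_uIcc_left (mem_uIcc_of_le hT ht))), add_zero]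
  have hsub : Ioi T ⊆ Ici t₀ := fun t ht => hT.trans (le_of_lt ht)
  have hneg : h' t₀ ≤ 0 := nonpos_of_eqOn_Ici_of_ae_le (by linarith) hconst
    (ae_restrict_of_ae_restrict_of_subset hsub hae) (hgint.mono_set hsub)
    (ae_restrict_of_ae_restrict_of_subset hsub hineq)
  refine exists_tendsto_of_bddBelow_of_integrableOn_max_deriv (a := T)
    (fun t ht => hd t (hT.trans ht)) (hc.mono (Ici_subset_Ici.2 hT))
    (hbd.mono (image_mono (Ici_subset_Ici.2 hT))) ?_
  exact integrableOn_zero.congr_fun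
    (fun t ht => by simp [hconst t (Ioi_subset_Ici_self ht), hneg]) measurableSet_Ioi
end
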